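/- arXiv:1307.5625 — 2 statements merged into one kernel-verified Lean document; each statement's English description precedes it below -/
import Mathlib

section
/- (Proposition 4.6) Let φ : 𝔸 ⇸ 𝔹 and ψ : 𝔸' ⇸ 𝔹' be Q-distributors, and let F : 𝔸 → 𝔸' and G : 𝔹' → 𝔹 be Q-functors forming an infomorphism (F,G) : φ → ψ, i.e. φ(x, G y') = ψ(F x, y') for all x ∈ A and y' ∈ B'. Then F is continuous from the Q-closure space (𝔸, φ↓∘φ↑) to (𝔸', ψ↓∘ψ↑): for every contravariant presheaf μ on 𝔸 and every x' ∈ A', F^→(φ↓(φ↑(μ)))(x') ≤ ψ↓(ψ↑(F^→(μ)))(x'), where F^→(ν)(x') = ⨆_{x∈A} (ν(x) * 𝔸'(x',Fx)). -/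
open IsQuantale

variable {Q : Type*} [Monoid Q] [CompleteLattice Q] [IsQuantale Q]

/-- Left implication `x ↙ y`: the largest `z` with `z * y ≤ x`. -/
def lres (x y : Q) : Q := sSup {z | z * y ≤ x}

/-- Right implication `y ↘ x`: the largest `z` with `y * z ≤ x`. -/
def rres (y x : Q) : Q := sSup {z | y * z ≤ x}

/-- A Q-category structure on a type `A`. -/
structure IsQCat {A : Type*} (𝔸 : A → A → Q) : Prop where
  refl : ∀ x, 1 ≤ 𝔸 x x
  comp : ∀ x y z, 𝔸 y z * 𝔸 x y ≤ 𝔸 x z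

/-- A Q-distributor `φ : 𝔸 ⇸ 𝔹`. -/
structure IsQDist {A B : Type*} (𝔸 : A → A → Q) (𝔹 : B → B → Q) (φ : A → B → Q) : Prop where
  comp_left : ∀ x y y', 𝔹 y' y * φ x y' ≤ φ x y
  comp_right : ∀ x x' y, φ x' y * 𝔸 x x' ≤ φ x y

/-- A Q-functor `F : 𝔸 → 𝔹`. -/
def IsQFunctor {A B : Type*} (𝔸 : A → A → Q) (𝔹 : B → B → Q) (F : A → B) : Prop :=
  ∀ x x', 𝔸 x x' ≤ 𝔹 (F x) (F x')

/-- A contravariant presheaf on `𝔸`. -/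
def IsContraPsh {A : Type*} (𝔸 : A → A → Q) (μ : A → Q) : Prop :=
  ∀ x x', μ x' * 𝔸 x x' ≤ μ x

/-- A covariant presheaf on `𝔹`. -/
def IsCoPsh {B : Type*} (𝔹 : B → B → Q) (lam : B → Q) : Prop :=
  ∀ y y', 𝔹 y y' * lam y ≤ lam y'

/-- `φ↑(μ)(y) = ⨅ x, φ(x,y) ↙ μ(x)`. -/
def phiUp {A B : Type*} (φ : A → B → Q) (μ : A → Q) : B → Q :=
  fun y => ⨅ x, lres (φ x y) (μ x)

/-- `φ↓(λ)(x) = ⨅ y, λ(y) ↘ φ(x,y)`. -/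
def phiDown {A B : Type*} (φ : A → B → Q) (lam : B → Q) : A → Q :=
  fun x => ⨅ y, rres (lam y) (φ x y)

/-- `φ*(λ)(x) = ⨆ y, λ(y) * φ(x,y)`. -/
def phiStar {A B : Type*} (φ : A → B → Q) (lam : B → Q) : A → Q :=
  fun x => ⨆ y, lam y * φ x y

/-- `φ_*(μ)(y) = ⨅ x, μ(x) ↙ φ(x,y)`. -/
def phiLow {A B : Type*} (φ : A → B → Q) (μ : A → Q) : B → Q :=
  fun y => ⨅ x, lres (μ x) (φ x y)

/-- The underlying set of the Q-category `P𝔸` of contravariant presheaves. -/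
abbrev CPsh {A : Type*} (𝔸 : A → A → Q) := {μ : A → Q // ∀ x x', μ x' * 𝔸 x x' ≤ μ x}

/-- The underlying set of the Q-category `P†𝔹` of covariant presheaves. -/
abbrev CoPsh {B : Type*} (𝔹 : B → B → Q) := {lam : B → Q // ∀ y y', 𝔹 y y' * lam y ≤ lam y'}

/-- The Yoneda embedding `x ↦ 𝔸(·,x)`. -/
def yonedaP {A : Type*} {𝔸 : A → A → Q} (hA : IsQCat 𝔸) (x : A) : CPsh 𝔸 :=
  ⟨fun x' => 𝔸 x' x, fun a b => hA.comp a b x⟩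


lemma le_lres' {z x y : Q} (h : z * y ≤ x) : z ≤ lres x y := le_sSup h

lemma lres_mul_le (x y : Q) : lres x y * y ≤ x := by
  rw [lres, sSup_mul_distrib]
  exact iSup₂_le fun z hz => hz

lemma lres_anti {x y y' : Q} (h : y' ≤ y) : lres x y ≤ lres x y' :=
  le_lres' (le_trans (mul_le_mul_right h _) (lres_mul_le x y))

lemma le_rres' {z x y : Q} (h : y * z ≤ x) : z ≤ rres y x := le_sSup h

lemma mul_rres_le (y x : Q) : y * rres y x ≤ x := by
  rw [rres, mul_sSup_distrib]
  exact iSup₂_le fun z hz => hz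

/-- Proposition 4.6: an infomorphism `(F,G) : φ → ψ` makes `F` continuous with respect
to the Isbell closure operators. -/
theorem infomorphism_isbell_continuous {A B A' B' : Type*}
    {𝔸 : A → A → Q} {𝔹 : B → B → Q} {𝔸' : A' → A' → Q} {𝔹' : B' → B' → Q}
    (hA : IsQCat 𝔸) (hB : IsQCat 𝔹) (hA' : IsQCat 𝔸') (hB' : IsQCat 𝔹')
    (φ : A → B → Q) (hφ : IsQDist 𝔸 𝔹 φ)
    (ψ : A' → B' → Q) (hψ : IsQDist 𝔸' 𝔹' ψ)
    (F : A → A') (hF : IsQFunctor 𝔸 𝔸' F)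
    (G : B' → B) (hG : IsQFunctor 𝔹' 𝔹 G)
    (hinfo : ∀ (x : A) (y' : B'), φ x (G y') = ψ (F x) y') :
    ∀ μ : A → Q, IsContraPsh 𝔸 μ → ∀ x' : A',
      (⨆ x, phiDown φ (phiUp φ μ) x * 𝔸' x' (F x)) ≤
        phiDown ψ (phiUp ψ (fun a' => ⨆ x, μ x * 𝔸' a' (F x))) x' := by
  intro μ hμ x'
  set ν : A' → Q := fun a' => ⨆ x, μ x * 𝔸' a' (F x) with hν
  apply iSup_le; intro x
  apply le_iInf; intro y'
  apply le_rres'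
  -- key: ψ↑ν(y') ≤ φ↑μ(G y')
  have hkey : phiUp ψ ν y' ≤ phiUp φ μ (G y') := by
    apply le_iInf; intro a
    refine le_trans (iInf_le _ (F a)) ?_
    rw [hinfo a y']
    apply lres_anti
    refine le_trans ?_ (le_iSup (fun x => μ x * 𝔸' (F a) (F x)) a)
    calc μ a = μ a * 1 := (mul_one _).symm
    _ ≤ μ a * 𝔸' (F a) (F a) := mul_le_mul_right (hA'.refl _) _
  have h1 : phiUp ψ ν y' * phiDown φ (phiUp φ μ) x ≤ ψ (F x) y' := by
    rw [← hinfo]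
    refine le_trans (mul_le_mul_left hkey _) ?_
    refine le_trans (mul_le_mul_right (iInf_le _ (G y')) _) ?_
    exact mul_rres_le _ _
  calc phiUp ψ ν y' * (phiDown φ (phiUp φ μ) x * 𝔸' x' (F x))
      = phiUp ψ ν y' * phiDown φ (phiUp φ μ) x * 𝔸' x' (F x) := (mul_assoc _ _ _).symm
    _ ≤ ψ (F x) y' * 𝔸' x' (F x) := mul_le_mul_left h1 _
    _ ≤ ψ x' y' := hψ.comp_right _ _ _
end

section
/- (Key step of Theorem 4.7: every Q-closure operator on P𝔸 arises from the Isbell adjunction of its distributor of closed presheaves, C = (ζ_C)↓ ∘ (ζ_C)↑) Let 𝔸 be a Q-category on A and C a Q-closure operator on P𝔸. Then for every μ ∈ P𝔸 and every x ∈ A: C(μ)(x) = ⨅ { (⨅_{x'∈A} (λ(x') ↙ μ(x'))) ↘ λ(x) : λ ∈ P𝔸 with C(λ) = λ }. -/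
open IsQuantale

variable {Q : Type*} [Monoid Q] [CompleteLattice Q] [IsQuantale Q]

lemma le_lres_iff {x y z : Q} : z ≤ lres x y ↔ z * y ≤ x :=
  Quantale.leftMulResiduation_le_iff_mul_le

lemma le_rres_iff {x y z : Q} : z ≤ rres y x ↔ y * z ≤ x :=
  Quantale.rightMulResiduation_le_iff_mul_le

/-- Key step of Theorem 4.7: every Q-closure operator `C` on `P𝔸` satisfies
`C = (ζ_C)↓ ∘ (ζ_C)↑` where `ζ_C` is the distributor of closed presheaves. -/
theorem closure_from_isbell {A : Type*} {𝔸 : A → A → Q} (hA : IsQCat 𝔸)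
    (C : CPsh 𝔸 → CPsh 𝔸)
    (hext : ∀ (μ : CPsh 𝔸) (x : A), μ.1 x ≤ (C μ).1 x)
    (hmono : ∀ μ μ' : CPsh 𝔸,
      (⨅ x, lres (μ'.1 x) (μ.1 x)) ≤ ⨅ x, lres ((C μ').1 x) ((C μ).1 x))
    (hidem : ∀ μ : CPsh 𝔸, C (C μ) = C μ) :
    ∀ (μ : CPsh 𝔸) (x : A),
      (C μ).1 x = ⨅ (lam : CPsh 𝔸) (_ : C lam = lam),
        rres (⨅ x', lres (lam.1 x') (μ.1 x')) (lam.1 x) := by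
  intro μ x
  apply le_antisymm
  · refine le_iInf fun lam => le_iInf fun hlam => ?_
    rw [le_rres_iff]
    have h := hmono μ lam
    rw [hlam] at h
    have h2 : (⨅ x', lres (lam.1 x') (μ.1 x')) ≤ lres (lam.1 x) ((C μ).1 x) :=
      h.trans (iInf_le _ x)
    exact le_lres_iff.mp h2
  · refine le_trans (iInf_le _ (C μ)) ?_
    refine le_trans (iInf_le _ (hidem μ)) ?_
    have h1 : (1 : Q) ≤ ⨅ x', lres ((C μ).1 x') (μ.1 x') :=
      le_iInf fun x' => le_lres_iff.mpr (by simpa using hext μ x')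
    calc rres (⨅ x', lres ((C μ).1 x') (μ.1 x')) ((C μ).1 x)
        = 1 * rres (⨅ x', lres ((C μ).1 x') (μ.1 x')) ((C μ).1 x) := (one_mul _).symm
      _ ≤ (⨅ x', lres ((C μ).1 x') (μ.1 x')) * rres (⨅ x', lres ((C μ).1 x') (μ.1 x')) ((C μ).1 x) :=
          mul_le_mul_left h1 _
      _ ≤ (C μ).1 x := le_rres_iff.mp le_rfl
end
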